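/- For L ∈ R[x][∂] of order r > 0 and k ≥ r: the left ideal R[x][∂]·M_k equals R[x][∂]·M_{k+1} if and only if σ(I_k) = I_{k+1}. -/

import Mathlib

open Polynomial

noncomputable section

/-- `Q_R(x)`, the field of rational functions over the fraction field `Q_R` of `R`,
realized as the fraction field of `R[x]`. -/
abbrev QX (R : Type) [CommRing R] [IsDomain R] := FractionRing (Polynomial R)

/-- Data of an Ore algebra `R[x][∂; σ, δ] ⊆ Q_R(x)[∂; σ, δ]`.
The ring `A` plays the role of `Q_R(x)[∂]`; `ι` embeds the coefficient field,
`D` is the Ore variable `∂`, subject to the commutation rule `∂·p = σ(p)·∂ + δ(p)`,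
and every element of `A` has a unique finite coefficient expansion `Σ ι(cᵢ)·∂^i`. -/
structure OreAlg (R : Type) [CommRing R] [IsDomain R] (A : Type) [Ring A] where
  σ : Polynomial R ≃+* Polynomial R
  σ_fix : ∀ r : R, σ (C r) = C r
  δ : Polynomial R → Polynomial R
  δ_add : ∀ f g, δ (f + g) = δ f + δ g
  δ_linear : ∀ (r : R) (f), δ (C r * f) = C r * δ f
  ι : QX R →+* A
  ι_inj : Function.Injective ι
  D : A
  comm_rule : ∀ p : Polynomial R,
    D * ι (algebraMap (Polynomial R) (QX R) p)
      = ι (algebraMap (Polynomial R) (QX R) (σ p)) * D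
        + ι (algebraMap (Polynomial R) (QX R) (δ p))
  δ_leibniz : ∀ f g, δ (f * g) = σ f * δ g + δ f * g
  coeff : A → ℕ → QX R
  coeff_inj : ∀ P Q : A, (∀ i, coeff P i = coeff Q i) → P = Q
  coeff_add : ∀ P Q i, coeff (P + Q) i = coeff P i + coeff Q i
  coeff_smul : ∀ (f : QX R) (P : A) (i), coeff (ι f * P) i = f * coeff P i
  coeff_bdd : ∀ P : A, ∃ N, ∀ i, N < i → coeff P i = 0
  coeff_mk : ∀ (N : ℕ) (c : ℕ → QX R), (∀ i, N < i → c i = 0) →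
    ∀ j, coeff (∑ i ∈ Finset.range (N + 1), ι (c i) * D ^ i) j = c j

namespace OreAlg

variable {R : Type} [CommRing R] [IsDomain R] {A : Type} [Ring A] (O : OreAlg R A)

/-- The embedding of `R[x]` into the Ore algebra. -/
def ιp (f : Polynomial R) : A := O.ι (algebraMap (Polynomial R) (QX R) f)

/-- The `i`-th `∂`-coefficient of `P` lies in `R[x]`. -/
def PolyCoeff (P : A) (i : ℕ) : Prop :=
  ∃ f : Polynomial R, O.coeff P i = algebraMap (Polynomial R) (QX R) f

/-- `P` belongs to the subring `R[x][∂]` of `Q_R(x)[∂]`. -/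
def InB (P : A) : Prop := ∀ i, O.PolyCoeff P i

/-- The order (degree in `∂`) of an operator. -/
def ord (P : A) : ℕ := sSup {i | O.coeff P i ≠ 0}

/-- The leading coefficient (with respect to `∂`), in `Q_R(x)`. -/
def lc (P : A) : QX R := O.coeff P (O.ord P)

/-- The contraction ideal `cont(L) = Q_R(x)[∂]·L ∩ R[x][∂]`. -/
def cont (L : A) : Set A := {P | O.InB P ∧ ∃ Q : A, P = Q * L}

/-- The `k`-th submodule `M_k(L) = {P ∈ cont(L) : deg_∂ P ≤ k}`. -/
def M (L : A) (k : ℕ) : Set A := {P | P ∈ O.cont L ∧ O.ord P ≤ k}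

/-- The `k`-th coefficient ideal `I_k = {[∂^k]P : P ∈ M_k} ∪ {0}` (as a set of
polynomials; `0` arises from `P = 0`). -/
def Icoeff (L : A) (k : ℕ) : Set (Polynomial R) :=
  {f | ∃ P ∈ O.M L k, O.coeff P k = algebraMap (Polynomial R) (QX R) f}

end OreAlg

/-- `gcd(p, w) = 1` in `R[x]`: every common divisor is a unit. -/
def Copr {R : Type} [CommRing R] (p w : Polynomial R) : Prop :=
  ∀ d : Polynomial R, d ∣ p → d ∣ w → IsUnit d

namespace OreAlg

variable {R : Type} [CommRing R] [IsDomain R] {A : Type} [Ring A] (O : OreAlg R A)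

/-- `P` is a `p`-removing operator for `L` over `R[x]`, of order `k`:
`P·L ∈ R[x][∂]` and `σ^{-k}(lc_∂(P·L)) = (w/(v·p))·lc_∂(L)` with `gcd(p, w) = 1`. -/
def IsRemoving (L : A) (p : Polynomial R) (k : ℕ) (P : A) : Prop :=
  O.ord P = k ∧ O.InB (P * L) ∧
  ∃ w v t l : Polynomial R, v ≠ 0 ∧ Copr p w ∧
    O.lc (P * L) = algebraMap (Polynomial R) (QX R) t ∧
    O.lc L = algebraMap (Polynomial R) (QX R) l ∧
    (⇑O.σ.symm)^[k] t * (v * p) = w * l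

/-- `p` is removable from `L` (at some order). -/
def Removable (L : A) (p : Polynomial R) : Prop :=
  ∃ k P, O.IsRemoving L p k P

/-- Factorization data for `lc_∂(L) = c·p₁^{e₁}⋯p_m^{e_m}`, with `c ∈ R` and the
`pᵢ ∈ R[x] \ R` irreducible and pairwise coprime; `L` has order `r > 0`. -/
def Factored (L : A) (r m : ℕ) (c : R) (p : Fin m → Polynomial R)
    (e : Fin m → ℕ) : Prop :=
  O.ord L = r ∧ 0 < r ∧ c ≠ 0 ∧
  O.lc L = algebraMap (Polynomial R) (QX R) (C c * ∏ i, p i ^ e i) ∧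
  (∀ i, Irreducible (p i) ∧ 0 < (p i).natDegree) ∧
  (∀ i j, i ≠ j → Copr (p i) (p j))

/-- `T` is a desingularized operator for `L`: `T ∈ cont(L)` and
`σ^{r-k}(lc_∂(T)) = (a/(b·∏ pᵢ^{kᵢ}))·lc_∂(L)` with `a, b ∈ R`, where each
`pᵢ^{dᵢ}` with `dᵢ > kᵢ` is non-removable from `L`. -/
def Desing (L : A) (r m : ℕ) (c : R) (p : Fin m → Polynomial R)
    (e : Fin m → ℕ) (T : A) : Prop :=
  T ∈ O.cont L ∧ r ≤ O.ord T ∧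
  ∃ (a b : R) (k : Fin m → ℕ) (t l : Polynomial R),
    b ≠ 0 ∧ (∀ i, k i ≤ e i) ∧
    O.lc T = algebraMap (Polynomial R) (QX R) t ∧
    O.lc L = algebraMap (Polynomial R) (QX R) l ∧
    (⇑O.σ.symm)^[O.ord T - r] t * (C b * ∏ i, p i ^ k i) = C a * l ∧
    (∀ i (d : ℕ), k i < d → ¬ O.Removable L (p i ^ d))

/-- The left ideal of `R[x][∂]` generated by a set `S ⊆ R[x][∂]`. -/
def LIdeal (S : Set A) : Set A :=
  {P | ∃ (n : ℕ) (co s : Fin n → A), (∀ i, O.InB (co i)) ∧ (∀ i, s i ∈ S) ∧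
    P = ∑ i, co i * s i}

/-- The constant `a ∈ R` viewed inside the Ore algebra. -/
def cst (a : R) : A := O.ιp (C a)

/-- The saturation `I : a^∞ = {P ∈ R[x][∂] : aⁱ·P ∈ I for some i}`. -/
def sat (I : Set A) (a : R) : Set A :=
  {P | O.InB P ∧ ∃ i : ℕ, O.cst a ^ i * P ∈ I}

end OreAlg

/-!
Put `V = R[x][∂]·M_k`. Moving polynomials to the right of `∂` with `p·∂ = ∂·σ⁻¹(p) - δ(σ⁻¹(p))`
shows that every element of `V` lies in some `M_k + ∂(M_k + ∂(⋯ + ∂M_k))`. In `s + ∂Q`, with `Q`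
of order `≤ k + m`, the coefficient of `∂^(k+m+1)` is `σ([∂^(k+m)]Q)`; when it vanishes one factor
`∂` can be dropped (for `m = 0` because then `∂Q ∈ M_k`). Hence an element of `V` of order
`≤ k + 1` is `s + ∂Q` with `s, Q ∈ M_k`, and its coefficient of `∂^(k+1)` is `σ([∂^k]Q) ∈ σ(I_k)`.
Conversely, if `P ∈ M_{k+1}` and `[∂^(k+1)]P = σ([∂^k]Q)` with `Q ∈ M_k`, then `P - ∂Q ∈ M_k`.
-/

namespace OreAlg

variable {R : Type} [CommRing R] [IsDomain R] {A : Type} [Ring A] (O : OreAlg R A)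

section Coefficients

def coeffHom (j : ℕ) : A →+ QX R := AddMonoidHom.mk' (O.coeff · j) (O.coeff_add · · j)

lemma coeff_zero (j : ℕ) : O.coeff 0 j = 0 := map_zero (O.coeffHom j)

lemma coeff_neg (P : A) (j : ℕ) : O.coeff (-P) j = -O.coeff P j := map_neg (O.coeffHom j) P

lemma coeff_sub (P Q : A) (j : ℕ) : O.coeff (P - Q) j = O.coeff P j - O.coeff Q j :=
  map_sub (O.coeffHom j) P Q

lemma coeff_sum {ι : Type*} (s : Finset ι) (F : ι → A) (j : ℕ) :
    O.coeff (∑ i ∈ s, F i) j = ∑ i ∈ s, O.coeff (F i) j :=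
  map_sum (O.coeffHom j) F s

lemma coeff_ι_mul_D_pow (f : QX R) (i j : ℕ) :
    O.coeff (O.ι f * O.D ^ i) j = if i = j then f else 0 := by
  have h := O.coeff_mk i (fun j' => if i = j' then f else 0) (fun _ hj => if_neg hj.ne) j
  rwa [Finset.sum_eq_single_of_mem i (Finset.self_mem_range_succ i)
    (fun _ _ hb => by rw [if_neg (Ne.symm hb), map_zero, zero_mul]), if_pos rfl] at h

lemma coeff_ιp_mul_D_pow (u : R[X]) (i j : ℕ) :
    O.coeff (O.ιp u * O.D ^ i) j = if i = j then algebraMap R[X] (QX R) u else 0 :=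
  O.coeff_ι_mul_D_pow _ i j

lemma eq_sum_ι_coeff_mul_D_pow (P : A) {N : ℕ} (hN : ∀ i, N < i → O.coeff P i = 0) :
    P = ∑ i ∈ Finset.range (N + 1), O.ι (O.coeff P i) * O.D ^ i :=
  O.coeff_inj _ _ fun j => (O.coeff_mk N (O.coeff P) hN j).symm

lemma exists_eq_sum_ιp_mul_D_pow {P : A} (hP : O.InB P) (n : ℕ) :
    ∃ N, n ≤ N ∧ ∃ c : ℕ → R[X], (∀ i, O.coeff P i = algebraMap R[X] (QX R) (c i)) ∧
      P = ∑ i ∈ Finset.range (N + 1), O.ιp (c i) * O.D ^ i := by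
  obtain ⟨N, hN⟩ := O.coeff_bdd P
  choose c hc using hP
  refine ⟨max N n, le_max_right N n, c, hc, ?_⟩
  conv_lhs =>
    rw [O.eq_sum_ι_coeff_mul_D_pow P fun i hi => hN i ((le_max_left N n).trans_lt hi)]
  simp only [hc, ιp]

lemma ord_le_iff {P : A} {n : ℕ} : O.ord P ≤ n ↔ ∀ j, n < j → O.coeff P j = 0 := by
  refine ⟨fun h j hj => ?_, fun h => csSup_le' fun i hi => not_lt.mp fun hlt => hi (h i hlt)⟩
  by_contra hne
  obtain ⟨N, hN⟩ := O.coeff_bdd P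
  have hbdd : BddAbove {i | O.coeff P i ≠ 0} := ⟨N, fun i hi => not_lt.mp fun h => hi (hN i h)⟩
  have := le_csSup hbdd hne
  unfold ord at h
  omega

end Coefficients

section PolynomialOperators

lemma InB_zero : O.InB (0 : A) := fun j => ⟨0, by rw [O.coeff_zero, map_zero]⟩

lemma InB_add {P Q : A} (hP : O.InB P) (hQ : O.InB Q) : O.InB (P + Q) := fun j => by
  obtain ⟨f, hf⟩ := hP j
  obtain ⟨g, hg⟩ := hQ j
  exact ⟨f + g, by rw [O.coeff_add, hf, hg, map_add]⟩

lemma InB_neg {P : A} (hP : O.InB P) : O.InB (-P) := fun j => by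
  obtain ⟨f, hf⟩ := hP j
  exact ⟨-f, by rw [O.coeff_neg, hf, map_neg]⟩

lemma InB_sum {ι : Type*} (s : Finset ι) (F : ι → A) (h : ∀ i ∈ s, O.InB (F i)) :
    O.InB (∑ i ∈ s, F i) :=
  Finset.sum_induction F O.InB (fun _ _ => O.InB_add) O.InB_zero h

lemma InB_ιp_mul (u : R[X]) {P : A} (hP : O.InB P) : O.InB (O.ιp u * P) := fun j => by
  obtain ⟨f, hf⟩ := hP j
  exact ⟨u * f, by rw [ιp, O.coeff_smul, hf, map_mul]⟩

lemma InB_ιp_mul_D_pow (u : R[X]) (i : ℕ) : O.InB (O.ιp u * O.D ^ i) := fun j =>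
  ⟨if i = j then u else 0, by rw [coeff_ιp_mul_D_pow]; split_ifs <;> simp⟩

lemma InB_one : O.InB (1 : A) := by
  simpa [ιp] using O.InB_ιp_mul_D_pow 1 0

lemma InB_D : O.InB O.D := by
  simpa [ιp] using O.InB_ιp_mul_D_pow 1 1

lemma δ_zero : O.δ 0 = 0 := by
  simpa using O.δ_add 0 0

lemma D_mul_ιp (p : R[X]) : O.D * O.ιp p = O.ιp (O.σ p) * O.D + O.ιp (O.δ p) :=
  O.comm_rule p

lemma D_mul_ιp_mul_D_pow (u : R[X]) (i : ℕ) :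
    O.D * (O.ιp u * O.D ^ i) = O.ιp (O.σ u) * O.D ^ (i + 1) + O.ιp (O.δ u) * O.D ^ i := by
  rw [← mul_assoc, D_mul_ιp, add_mul, mul_assoc, ← pow_succ']

lemma InB_D_mul {P : A} (hP : O.InB P) : O.InB (O.D * P) := by
  obtain ⟨N, -, c, -, rfl⟩ := O.exists_eq_sum_ιp_mul_D_pow hP 0
  rw [Finset.mul_sum]
  refine O.InB_sum _ _ fun i _ => ?_
  rw [D_mul_ιp_mul_D_pow]
  exact O.InB_add (O.InB_ιp_mul_D_pow _ _) (O.InB_ιp_mul_D_pow _ _)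

lemma coeff_D_mul {P : A} (hP : O.InB P) {j : ℕ} {f g : R[X]}
    (hf : O.coeff P j = algebraMap R[X] (QX R) f)
    (hg : O.coeff P (j + 1) = algebraMap R[X] (QX R) g) :
    O.coeff (O.D * P) (j + 1) = algebraMap R[X] (QX R) (O.σ f + O.δ g) := by
  obtain ⟨N, hN, c, hc, hPc⟩ := O.exists_eq_sum_ιp_mul_D_pow hP (j + 1)
  have hcf : c j = f := IsFractionRing.injective _ _ (by rw [← hc, hf])
  have hcg : c (j + 1) = g := IsFractionRing.injective _ _ (by rw [← hc, hg])
  rw [hPc, Finset.mul_sum, coeff_sum]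
  simp only [D_mul_ιp_mul_D_pow, coeff_add, coeff_ιp_mul_D_pow, add_left_inj,
    Finset.sum_add_distrib, Finset.sum_ite_eq', Finset.mem_range]
  rw [if_pos (by omega), if_pos (by omega), hcf, hcg, map_add]

lemma coeff_D_mul_of_ord_le {P : A} (hP : O.InB P) {n : ℕ} (hord : O.ord P ≤ n) {f : R[X]}
    (hf : O.coeff P n = algebraMap R[X] (QX R) f) :
    O.coeff (O.D * P) (n + 1) = algebraMap R[X] (QX R) (O.σ f) := by
  have hg : O.coeff P (n + 1) = algebraMap R[X] (QX R) 0 := by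
    rw [O.ord_le_iff.mp hord _ n.lt_succ_self, map_zero]
  rw [O.coeff_D_mul hP hf hg, δ_zero, add_zero]

lemma ord_D_mul_le {P : A} (hP : O.InB P) {n : ℕ} (hord : O.ord P ≤ n) :
    O.ord (O.D * P) ≤ n + 1 := by
  refine O.ord_le_iff.mpr fun j hj => ?_
  obtain ⟨j, rfl⟩ : ∃ i, j = i + 1 := ⟨j - 1, by omega⟩
  have hzero : ∀ i, n < i → O.coeff P i = algebraMap R[X] (QX R) 0 := fun i hi => by
    rw [O.ord_le_iff.mp hord i hi, map_zero]
  rw [O.coeff_D_mul hP (hzero j (by omega)) (hzero (j + 1) (by omega)), map_zero, δ_zero,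
    add_zero, map_zero]

lemma InB_D_pow_mul {P : A} (hP : O.InB P) (i : ℕ) : O.InB (O.D ^ i * P) := by
  induction i with
  | zero => simpa using hP
  | succ i ih =>
    rw [pow_succ', mul_assoc]
    exact O.InB_D_mul ih

lemma InB_mul {P Q : A} (hP : O.InB P) (hQ : O.InB Q) : O.InB (P * Q) := by
  obtain ⟨N, -, c, -, rfl⟩ := O.exists_eq_sum_ιp_mul_D_pow hP 0
  rw [Finset.sum_mul]
  refine O.InB_sum _ _ fun i _ => ?_
  rw [mul_assoc]
  exact O.InB_ιp_mul _ (O.InB_D_pow_mul hQ i)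

def polySubring : Subring A where
  carrier := {P | O.InB P}
  mul_mem' := O.InB_mul
  one_mem' := O.InB_one
  add_mem' := O.InB_add
  zero_mem' := O.InB_zero
  neg_mem' := O.InB_neg

lemma LIdeal_eq_span (S : Set A) : O.LIdeal S = Submodule.span O.polySubring S := by
  ext P
  rw [SetLike.mem_coe, Submodule.mem_span_set']
  constructor
  · rintro ⟨n, co, s, hco, hs, rfl⟩
    exact ⟨n, fun i => ⟨co i, hco i⟩, fun i => ⟨s i, hs i⟩, rfl⟩
  · rintro ⟨n, co, s, rfl⟩
    exact ⟨n, fun i => co i, fun i => s i, fun i => (co i).2, fun i => (s i).2, rfl⟩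

end PolynomialOperators

section CoefficientIdeals

variable {L : A} {k : ℕ}

lemma mul_mem_cont {b P : A} (hb : O.InB b) (hP : P ∈ O.cont L) : b * P ∈ O.cont L := by
  obtain ⟨hPB, Z, rfl⟩ := hP
  exact ⟨O.InB_mul hb hPB, b * Z, (mul_assoc b Z L).symm⟩

def MAddSubgroup (L : A) (k : ℕ) : AddSubgroup A where
  carrier := O.M L k
  zero_mem' := ⟨⟨O.InB_zero, 0, (zero_mul L).symm⟩, O.ord_le_iff.mpr fun j _ => O.coeff_zero j⟩
  add_mem' := by
    rintro P Q ⟨⟨hPB, Z, rfl⟩, hP⟩ ⟨⟨hQB, Z', rfl⟩, hQ⟩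
    refine ⟨⟨O.InB_add hPB hQB, Z + Z', (add_mul Z Z' L).symm⟩, O.ord_le_iff.mpr fun j hj => ?_⟩
    rw [O.coeff_add, O.ord_le_iff.mp hP j hj, O.ord_le_iff.mp hQ j hj, add_zero]
  neg_mem' := by
    rintro P ⟨⟨hPB, Z, rfl⟩, hP⟩
    refine ⟨⟨O.InB_neg hPB, -Z, (neg_mul Z L).symm⟩, O.ord_le_iff.mpr fun j hj => ?_⟩
    rw [O.coeff_neg, O.ord_le_iff.mp hP j hj, neg_zero]

lemma M_mono {k k' : ℕ} (h : k ≤ k') : O.M L k ⊆ O.M L k' :=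
  fun _ hP => ⟨hP.1, hP.2.trans h⟩

lemma ιp_mul_mem_M (u : R[X]) {P : A} (hP : P ∈ O.M L k) : O.ιp u * P ∈ O.M L k := by
  refine ⟨O.mul_mem_cont (by simpa using O.InB_ιp_mul_D_pow u 0) hP.1,
    O.ord_le_iff.mpr fun j hj => ?_⟩
  rw [ιp, O.coeff_smul, O.ord_le_iff.mp hP.2 j hj, mul_zero]

lemma D_mul_mem_M {P : A} (hP : P ∈ O.M L k) : O.D * P ∈ O.M L (k + 1) :=
  ⟨O.mul_mem_cont O.InB_D hP.1, O.ord_D_mul_le hP.1.1 hP.2⟩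

lemma mem_M_of_coeff_eq_zero {P : A} (hP : P ∈ O.M L (k + 1)) (h : O.coeff P (k + 1) = 0) :
    P ∈ O.M L k := by
  refine ⟨hP.1, O.ord_le_iff.mpr fun j hj => ?_⟩
  rcases (Nat.succ_le_of_lt hj).eq_or_lt with rfl | hj
  · exact h
  · exact O.ord_le_iff.mp hP.2 j hj

lemma image_σ_Icoeff_subset : O.σ '' O.Icoeff L k ⊆ O.Icoeff L (k + 1) := by
  rintro _ ⟨f, ⟨P, hP, hf⟩, rfl⟩
  exact ⟨O.D * P, O.D_mul_mem_M hP, O.coeff_D_mul_of_ord_le hP.1.1 hP.2 hf⟩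

lemma coeff_add_D_mul {m : ℕ} {s Q : A} (hs : s ∈ O.M L k) (hQ : Q ∈ O.M L (k + m)) {g : R[X]}
    (hg : O.coeff Q (k + m) = algebraMap R[X] (QX R) g) :
    O.coeff (s + O.D * Q) (k + m + 1) = algebraMap R[X] (QX R) (O.σ g) := by
  rw [O.coeff_add, O.ord_le_iff.mp hs.2 _ (by omega), zero_add,
    O.coeff_D_mul_of_ord_le hQ.1.1 hQ.2 hg]

lemma M_succ_subset_span (h : O.Icoeff L (k + 1) ⊆ O.σ '' O.Icoeff L k) :
    O.M L (k + 1) ⊆ Submodule.span O.polySubring (O.M L k) := by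
  intro P hP
  obtain ⟨f, hf⟩ := hP.1.1 (k + 1)
  obtain ⟨g, ⟨Q, hQ, hg⟩, rfl⟩ := h ⟨P, hP, hf⟩
  have hPQ : P - O.D * Q ∈ O.M L k := by
    refine O.mem_M_of_coeff_eq_zero ((O.MAddSubgroup L (k + 1)).sub_mem hP (O.D_mul_mem_M hQ)) ?_
    rw [O.coeff_sub, hf, O.coeff_D_mul_of_ord_le hQ.1.1 hQ.2 hg, sub_self]
  rw [← sub_add_cancel P (O.D * Q)]
  exact add_mem (Submodule.subset_span hPQ)
    (Submodule.smul_mem _ (⟨O.D, O.InB_D⟩ : O.polySubring) (Submodule.subset_span hQ))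

end CoefficientIdeals

section Filtration

variable {L : A} {k : ℕ}

/-- `M_k + ∂M_k + ⋯ + ∂^m M_k`, in Horner form. -/
def filtration (L : A) (k : ℕ) : ℕ → AddSubgroup A
  | 0 => O.MAddSubgroup L k
  | m + 1 => O.MAddSubgroup L k ⊔ (filtration L k m).map (AddMonoidHom.mulLeft O.D)

lemma mem_filtration_succ {m : ℕ} {P : A} :
    P ∈ O.filtration L k (m + 1) ↔ ∃ s ∈ O.M L k, ∃ Q ∈ O.filtration L k m, s + O.D * Q = P := by
  simp only [filtration, AddSubgroup.mem_sup, AddSubgroup.mem_map, AddMonoidHom.coe_mulLeft,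
    exists_exists_and_eq_and]
  rfl

lemma filtration_mono : Monotone (O.filtration L k) := by
  refine monotone_nat_of_le_succ fun m => ?_
  induction m with
  | zero => exact le_sup_left
  | succ m ih => exact sup_le_sup_left (AddSubgroup.map_mono ih) _

lemma mem_M_of_mem_filtration {m : ℕ} {P : A} (hP : P ∈ O.filtration L k m) :
    P ∈ O.M L (k + m) := by
  induction m generalizing P with
  | zero => exact hP
  | succ m ih =>
    obtain ⟨s, hs, Q, hQ, rfl⟩ := O.mem_filtration_succ.mp hP
    exact (O.MAddSubgroup L (k + (m + 1))).add_mem (O.M_mono (by omega) hs)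
      (O.D_mul_mem_M (ih hQ))

lemma D_mul_mem_filtration {m : ℕ} {P : A} (hP : P ∈ O.filtration L k m) :
    O.D * P ∈ O.filtration L k (m + 1) :=
  O.mem_filtration_succ.mpr ⟨0, zero_mem (O.MAddSubgroup L k), P, hP, zero_add _⟩

lemma D_pow_mul_mem_filtration {m : ℕ} {P : A} (hP : P ∈ O.filtration L k m) (i : ℕ) :
    O.D ^ i * P ∈ O.filtration L k (m + i) := by
  induction i with
  | zero => simpa using hP
  | succ i ih =>
    rw [pow_succ', mul_assoc]
    exact O.D_mul_mem_filtration ih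

lemma ιp_mul_mem_filtration {m : ℕ} (u : R[X]) {P : A} (hP : P ∈ O.filtration L k m) :
    O.ιp u * P ∈ O.filtration L k m := by
  induction m generalizing u P with
  | zero => exact O.ιp_mul_mem_M u hP
  | succ m ih =>
    obtain ⟨s, hs, Q, hQ, rfl⟩ := O.mem_filtration_succ.mp hP
    obtain ⟨v, rfl⟩ := O.σ.surjective u
    have hcomm : O.ιp (O.σ v) * (O.D * Q) = O.D * (O.ιp v * Q) - O.ιp (O.δ v) * Q := by
      rw [← mul_assoc, ← mul_assoc, D_mul_ιp, add_mul, add_sub_cancel_right]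
    rw [mul_add, hcomm]
    refine add_mem (AddSubgroup.mem_sup_left (O.ιp_mul_mem_M _ hs)) (sub_mem ?_ ?_)
    · exact O.D_mul_mem_filtration (ih v hQ)
    · exact O.filtration_mono m.le_succ (ih _ hQ)

lemma exists_mul_mem_filtration {m : ℕ} {b P : A} (hb : O.InB b)
    (hP : P ∈ O.filtration L k m) : ∃ n, b * P ∈ O.filtration L k n := by
  obtain ⟨N, -, c, -, rfl⟩ := O.exists_eq_sum_ιp_mul_D_pow hb 0
  refine ⟨m + N, ?_⟩
  rw [Finset.sum_mul]
  refine sum_mem fun i hi => ?_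
  rw [mul_assoc]
  have hiN : m + i ≤ m + N := by simp only [Finset.mem_range] at hi; omega
  exact O.ιp_mul_mem_filtration _ (O.filtration_mono hiN (O.D_pow_mul_mem_filtration hP i))

lemma exists_mem_filtration_of_mem_span {P : A}
    (hP : P ∈ Submodule.span O.polySubring (O.M L k)) : ∃ m, P ∈ O.filtration L k m := by
  induction hP using Submodule.span_induction with
  | mem P hP => exact ⟨0, hP⟩
  | zero => exact ⟨0, zero_mem _⟩
  | add P Q _ _ hP hQ =>
    obtain ⟨m, hm⟩ := hP
    obtain ⟨n, hn⟩ := hQ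
    exact ⟨max m n, add_mem (O.filtration_mono (le_max_left m n) hm)
      (O.filtration_mono (le_max_right m n) hn)⟩
  | smul b P _ hP =>
    obtain ⟨m, hm⟩ := hP
    exact O.exists_mul_mem_filtration b.2 hm

lemma exists_add_D_mul_of_coeff_eq_zero {m : ℕ} {P : A} (hP : P ∈ O.filtration L k (m + 1))
    (h : O.coeff P (k + m + 1) = 0) :
    ∃ s ∈ O.M L k, ∃ Q ∈ O.filtration L k m, O.coeff Q (k + m) = 0 ∧ s + O.D * Q = P := by
  obtain ⟨s, hs, Q, hQ, rfl⟩ := O.mem_filtration_succ.mp hP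
  have hQM := O.mem_M_of_mem_filtration hQ
  obtain ⟨g, hg⟩ := hQM.1.1 (k + m)
  rw [O.coeff_add_D_mul hs hQM hg] at h
  simp only [IsFractionRing.to_map_eq_zero_iff, map_eq_zero_iff _ O.σ.injective] at h
  exact ⟨s, hs, Q, hQ, by rw [hg, h, map_zero], rfl⟩

lemma mem_filtration_of_coeff_eq_zero {m : ℕ} {P : A} (hP : P ∈ O.filtration L k (m + 1))
    (h : O.coeff P (k + m + 1) = 0) : P ∈ O.filtration L k m := by
  induction m generalizing P with
  | zero =>
    obtain ⟨s, hs, Q, hQ, hQ0, rfl⟩ := O.exists_add_D_mul_of_coeff_eq_zero hP h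
    refine (O.MAddSubgroup L k).add_mem hs (O.mem_M_of_coeff_eq_zero (O.D_mul_mem_M hQ) ?_)
    rw [O.coeff_D_mul_of_ord_le hQ.1.1 hQ.2 (f := 0) (by simpa using hQ0), map_zero, map_zero]
  | succ m ih =>
    obtain ⟨s, hs, Q, hQ, hQ0, rfl⟩ := O.exists_add_D_mul_of_coeff_eq_zero hP h
    exact O.mem_filtration_succ.mpr ⟨s, hs, Q, ih hQ hQ0, rfl⟩

lemma mem_filtration_of_ord_le {m n : ℕ} {P : A} (hP : P ∈ O.filtration L k m)
    (hord : O.ord P ≤ k + n) : P ∈ O.filtration L k n := by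
  induction m with
  | zero => exact O.filtration_mono (Nat.zero_le n) hP
  | succ m ih =>
    rcases le_or_gt (m + 1) n with hmn | hnm
    · exact O.filtration_mono hmn hP
    · exact ih (O.mem_filtration_of_coeff_eq_zero hP (O.ord_le_iff.mp hord _ (by omega)))

lemma coeff_mem_image_of_mem_filtration_one {P : A} (hP : P ∈ O.filtration L k 1) {f : R[X]}
    (hf : O.coeff P (k + 1) = algebraMap R[X] (QX R) f) : f ∈ O.σ '' O.Icoeff L k := by
  obtain ⟨s, hs, Q, hQ, rfl⟩ := O.mem_filtration_succ.mp hP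
  obtain ⟨g, hg⟩ := hQ.1.1 k
  refine ⟨g, ⟨Q, hQ, hg⟩, IsFractionRing.injective R[X] (QX R) ?_⟩
  rw [← hf, O.coeff_add_D_mul (m := 0) hs hQ hg]

lemma coeff_mem_image_of_mem_span {P : A} (hP : P ∈ Submodule.span O.polySubring (O.M L k))
    (hord : O.ord P ≤ k + 1) {f : R[X]} (hf : O.coeff P (k + 1) = algebraMap R[X] (QX R) f) :
    f ∈ O.σ '' O.Icoeff L k := by
  obtain ⟨m, hm⟩ := O.exists_mem_filtration_of_mem_span hP
  exact O.coeff_mem_image_of_mem_filtration_one (O.mem_filtration_of_ord_le hm hord) hf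

end Filtration

end OreAlg

theorem ideal_stable_iff_coeff_shift_general {R : Type} [CommRing R] [IsDomain R]
    {A : Type} [Ring A] (O : OreAlg R A)
    (L : A)
    (k : ℕ) :
    O.LIdeal (O.M L k) = O.LIdeal (O.M L (k + 1)) ↔
      (⇑O.σ) '' O.Icoeff L k = O.Icoeff L (k + 1) := by
  simp only [OreAlg.LIdeal_eq_span, SetLike.coe_set_eq]
  constructor
  · intro h
    refine O.image_σ_Icoeff_subset.antisymm fun f ⟨P, hP, hf⟩ => ?_
    have hP' : P ∈ Submodule.span O.polySubring (O.M L k) := h ▸ Submodule.subset_span hP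
    exact O.coeff_mem_image_of_mem_span hP' hP.2 hf
  · intro h
    exact le_antisymm (Submodule.span_mono (O.M_mono k.le_succ))
      (Submodule.span_le.mpr (O.M_succ_subset_span h.ge))

/-- for `k ≥ r`, the left ideal `R[x][∂]·M_k` equals
`R[x][∂]·M_{k+1}` if and only if `σ(I_k) = I_{k+1}`. -/
theorem ideal_stable_iff_coeff_shift {R : Type} [CommRing R] [IsDomain R]
    [IsPrincipalIdealRing R] {A : Type} [Ring A] (O : OreAlg R A)
    (L : A) (hL : L ≠ 0) (hLB : O.InB L)
    (r : ℕ) (hr : O.ord L = r) (hrpos : 0 < r)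
    (k : ℕ) (hk : r ≤ k) :
    O.LIdeal (O.M L k) = O.LIdeal (O.M L (k + 1)) ↔
      (⇑O.σ) '' O.Icoeff L k = O.Icoeff L (k + 1) :=
  ideal_stable_iff_coeff_shift_general O L k
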